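/- arXiv:1503.01763 — 5 statements merged into one kernel-verified Lean document; each statement's English description precedes it below -/
import Mathlib

section
/- Let S_0, S_1, ..., S_{N-1} be operators on a Hilbert space satisfying the Cuntz relations S_j* S_k = δ_{jk} I. Let f be a unit vector with S_0 f = f. Then the family {S_ω f : ω ∈ X} is orthonormal, where X consists of all words in the alphabet {0,...,N-1} of length 1, together with all words of length ≥ 2 whose last (rightmost) letter is nonzero, and S_ω denotes the composition S_{j_K} ∘ ... ∘ S_{j_1} for ω = j_K j_{K-1} ... j_1. -/
/-!
The Cuntz relations let one compute `⟪S_a x, S_b y⟫` letter by letter from the outside: a common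
outermost letter cancels, two different ones give `0`. Hence for words `a ≠ b` not ending in `0`,
after cancelling their common prefix either two different letters meet, or one is left with
`⟪f, S_c f⟫` for a nonempty word `c` not ending in `0`; rewriting `f = S_0 f` peels `c` letter by
letter until a nonzero letter meets `S_0`. So these words give an orthonormal family, and
prepending one arbitrary letter keeps it orthonormal; the words obtained that way are exactly `X`.
-/

open InnerProductSpace

section

variable {𝕜 E ι : Type*} [RCLike 𝕜] [NormedAddCommGroup E] [InnerProductSpace 𝕜 E]
  [DecidableEq ι]

variable (𝕜) in
/-- The relations `(S j)† ∘ S k = if j = k then id else 0`, stated without adjoints. -/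
def IsCuntzFamily (S : ι → E → E) : Prop :=
  ∀ j k x y, ⟪S j x, S k y⟫_𝕜 = if j = k then ⟪x, y⟫_𝕜 else 0

theorem IsCuntzFamily.of_adjoint_comp [CompleteSpace E] {S : ι → E →L[𝕜] E}
    (h : ∀ j k, (ContinuousLinearMap.adjoint (S j)).comp (S k) =
      if j = k then ContinuousLinearMap.id 𝕜 E else 0) :
    IsCuntzFamily 𝕜 fun j => ⇑(S j) := by
  intro j k x y
  rw [← ContinuousLinearMap.adjoint_inner_right, ← ContinuousLinearMap.comp_apply, h]
  split_ifs <;> simp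

namespace IsCuntzFamily

variable {S : ι → E → E}

theorem inner_foldr_eq_zero (hS : IsCuntzFamily 𝕜 S) {i₀ : ι} {f : E} (hfix : S i₀ f = f) :
    ∀ {l : List ι}, l ≠ [] → l.getLast? ≠ some i₀ → ⟪f, l.foldr S f⟫_𝕜 = 0
  | [], hl, _ => absurd rfl hl
  | [j], _, hlast => by
    rw [List.foldr_cons, List.foldr_nil]
    nth_rewrite 1 [← hfix]
    rw [hS, if_neg (by simpa [eq_comm] using hlast)]
  | j :: k :: t, _, hlast => by
    rw [List.foldr_cons]
    nth_rewrite 1 [← hfix]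
    rw [hS]
    split_ifs
    · exact inner_foldr_eq_zero hS hfix (List.cons_ne_nil k t)
        (by rwa [List.getLast?_cons_cons] at hlast)
    · rfl

theorem inner_foldr_foldr (hS : IsCuntzFamily 𝕜 S) {i₀ : ι} {f : E} (hfix : S i₀ f = f) :
    ∀ {a b : List ι}, a.getLast? ≠ some i₀ → b.getLast? ≠ some i₀ →
      ⟪a.foldr S f, b.foldr S f⟫_𝕜 = if a = b then ⟪f, f⟫_𝕜 else 0
  | [], [], _, _ => by simp
  | [], k :: s, _, hb => by
    simpa using hS.inner_foldr_eq_zero hfix (List.cons_ne_nil k s) hb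
  | j :: t, [], ha, _ => by
    simpa using inner_eq_zero_symm.mp (hS.inner_foldr_eq_zero hfix (List.cons_ne_nil j t) ha)
  | j :: t, k :: s, ha, hb => by
    have ht : t.getLast? ≠ some i₀ := by cases t <;> simp_all [List.getLast?_cons_cons]
    have hs : s.getLast? ≠ some i₀ := by cases s <;> simp_all [List.getLast?_cons_cons]
    rw [List.foldr_cons, List.foldr_cons, hS, inner_foldr_foldr hS hfix ht hs]
    simp only [List.cons.injEq, ite_and]

theorem orthonormal_foldr (hS : IsCuntzFamily 𝕜 S) {i₀ : ι} {f : E} (hf : ‖f‖ = 1)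
    (hfix : S i₀ f = f) :
    Orthonormal 𝕜 fun l : {l : List ι // l.getLast? ≠ some i₀} => l.1.foldr S f := by
  rw [orthonormal_iff_ite]
  rintro ⟨a, ha⟩ ⟨b, hb⟩
  simp [hS.inner_foldr_foldr hfix ha hb, inner_self_eq_norm_sq_to_K, hf]

theorem orthonormal_foldr_cons (hS : IsCuntzFamily 𝕜 S) {p : List ι → Prop} {x : E}
    (h : Orthonormal 𝕜 fun l : {l // p l} => l.1.foldr S x) :
    Orthonormal 𝕜 fun l : {l // ∃ j t, l = j :: t ∧ p t} => l.1.foldr S x := by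
  rw [orthonormal_iff_ite] at h ⊢
  rintro ⟨_, j, t, rfl, ht⟩ ⟨_, k, s, rfl, hs⟩
  rw [List.foldr_cons, List.foldr_cons, hS, h ⟨t, ht⟩ ⟨s, hs⟩]
  simp only [Subtype.mk.injEq, List.cons.injEq, ite_and]

end IsCuntzFamily

end

theorem List.exists_eq_cons_getLast?_ne_iff {α : Type*} {a : α} {l : List α} :
    (∃ j t, l = j :: t ∧ t.getLast? ≠ some a) ↔
      l.length = 1 ∨ (2 ≤ l.length ∧ l.getLast? ≠ some a) := by
  rcases l with _ | ⟨j, _ | ⟨k, t⟩⟩ <;> simp [List.getLast?_cons_cons]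

/-- If `S 0, …, S (N-1)` satisfy the Cuntz relations `Sⱼ* Sₖ = δⱼₖ I`,
`f` is a unit vector with `S 0 f = f`, then the family `{S_ω f}` indexed by words
`ω = j_K … j_1` (as lists, leftmost letter first) which have length 1, or length ≥ 2 with
rightmost letter `j_1 ≠ 0`, is orthonormal.  Here `S_ω f = S_{j_K}(⋯(S_{j_1} f))`. -/
theorem cuntz_orbit_orthonormal
    {H : Type*} [NormedAddCommGroup H] [InnerProductSpace ℂ H] [CompleteSpace H]
    (N : ℕ) [NeZero N] (S : Fin N → H →L[ℂ] H)
    (hCuntz : ∀ j k : Fin N, (ContinuousLinearMap.adjoint (S j)).comp (S k) =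
      if j = k then ContinuousLinearMap.id ℂ H else 0)
    (f : H) (hf : ‖f‖ = 1) (hfix : S 0 f = f) :
    Orthonormal ℂ
      (fun ω : {l : List (Fin N) //
          l.length = 1 ∨ (2 ≤ l.length ∧ l.getLast? ≠ some 0)} =>
        (ω : List (Fin N)).foldr (fun j v => S j v) f) := by
  have hS := IsCuntzFamily.of_adjoint_comp hCuntz
  have h := hS.orthonormal_foldr_cons (hS.orthonormal_foldr hf hfix)
  exact h.comp _
    (Equiv.subtypeEquivRight fun _ => List.exists_eq_cons_getLast?_ne_iff).symm.injective
end

section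
/- The product measure μ_4 × λ is the unique invariant probability measure for the iterated function system on ℝ² given by Υ_0(x,y) = (x/4, y/2), Υ_1(x,y) = ((x+2)/4, y/2), Υ_2(x,y) = (x/4, (y+1)/2), Υ_3(x,y) = ((x+2)/4, (y+1)/2) with equal weights 1/4; i.e., ∫ f d(μ_4×λ) = (1/4) Σ_{j=0}^{3} ∫ f ∘ Υ_j d(μ_4×λ) for all continuous f : ℝ² → ℂ. -/
/-
Averaging a test function over the maps of the IFS defines a transfer operator `𝒯`, and an
invariant measure `ρ` satisfies `∫ 𝒯 f dρ = ∫ f dρ`. When every map is a `K`-contraction with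
`K < 1`, `𝒯ⁿ f` is `L Kⁿ`-Lipschitz for an `L`-Lipschitz `f`, so `𝒯ⁿ f x - 𝒯ⁿ f x₀ → 0` pointwise;
by dominated convergence `∫ f dρ = lim 𝒯ⁿ f x₀` for every invariant probability measure `ρ`.
Since bounded Lipschitz functions determine a probability measure, there is at most one.
For existence, the IFS `Υ` is the product of `τ₀, τ₂` on the first coordinate with
`y ↦ y/2, y ↦ (y+1)/2` on the second, for which `μ₄` and `λ` are invariant, and Hutchinson's
equation `∑ᵢ ρ ∘ Tᵢ⁻¹ = N • ρ` passes to products of measures.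
-/

open MeasureTheory Set

/-- The four maps of the IFS on ℝ²: Υ₀(x,y)=(x/4,y/2), Υ₁(x,y)=((x+2)/4,y/2),
Υ₂(x,y)=(x/4,(y+1)/2), Υ₃(x,y)=((x+2)/4,(y+1)/2). -/
noncomputable def Ups : Fin 4 → ℝ × ℝ → ℝ × ℝ :=
  ![fun z => (z.1 / 4, z.2 / 2), fun z => ((z.1 + 2) / 4, z.2 / 2),
    fun z => (z.1 / 4, (z.2 + 1) / 2), fun z => ((z.1 + 2) / 4, (z.2 + 1) / 2)]

/-- A measure `ρ` on ℝ² is invariant for the IFS `Ups` with equal weights 1/4 if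
`∫ f dρ = (1/4) Σ_j ∫ f ∘ Υ_j dρ` for every bounded continuous `f : ℝ² → ℂ`. -/
def IsInvariant2D (ρ : Measure (ℝ × ℝ)) : Prop :=
  ∀ f : ℝ × ℝ → ℂ, Continuous f → (∃ C : ℝ, ∀ z, ‖f z‖ ≤ C) →
    ∫ z, f z ∂ρ = (1 / 4 : ℂ) * ∑ j : Fin 4, ∫ z, f (Ups j z) ∂ρ

open Filter Topology
open scoped NNReal ENNReal BoundedContinuousFunction

variable {ι κ X Y : Type*}

def IsIFSInvariant [Fintype ι] [MeasurableSpace X] (T : ι → X → X) (ρ : Measure X) : Prop :=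
  ∑ i, ρ.map (T i) = Fintype.card ι • ρ

noncomputable def transferOp [Fintype ι] (T : ι → X → X) (f : X → ℝ) (x : X) : ℝ :=
  (Fintype.card ι : ℝ)⁻¹ * ∑ i, f (T i x)

def prodMaps (S : ι → X → X) (T : κ → Y → Y) (p : ι × κ) : X × Y → X × Y :=
  Prod.map (S p.1) (T p.2)

theorem LipschitzWith.prodMaps [PseudoEMetricSpace X] [PseudoEMetricSpace Y] {S : ι → X → X}
    {T : κ → Y → Y} {K : ℝ≥0} (hS : ∀ i, LipschitzWith K (S i)) (hT : ∀ j, LipschitzWith K (T j))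
    (p : ι × κ) : LipschitzWith K (_root_.prodMaps S T p) := by
  show LipschitzWith K fun z : X × Y => (S p.1 z.1, T p.2 z.2)
  simpa only [mul_one, max_self, Function.comp_apply] using
    ((hS p.1).comp LipschitzWith.prod_fst).prodMk ((hT p.2).comp LipschitzWith.prod_snd)

section TransferOperator

variable [Fintype ι] [Nonempty ι] {T : ι → X → X} {f : X → ℝ}

theorem dist_transferOp_le_of_forall {x y : X} {C : ℝ}
    (h : ∀ i, dist (f (T i x)) (f (T i y)) ≤ C) :
    dist (transferOp T f x) (transferOp T f y) ≤ C := by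
  have hcard : (0 : ℝ) < Fintype.card ι := Nat.cast_pos.2 Fintype.card_pos
  calc dist (transferOp T f x) (transferOp T f y)
      = (Fintype.card ι : ℝ)⁻¹ * dist (∑ i, f (T i x)) (∑ i, f (T i y)) := by
        simp only [transferOp, ← smul_eq_mul, dist_smul₀, norm_inv, Real.norm_natCast]
    _ ≤ (Fintype.card ι : ℝ)⁻¹ * ∑ _i : ι, C := by
        gcongr
        exact (dist_sum_sum_le _ _ _).trans (Finset.sum_le_sum fun i _ => h i)
    _ = C := by simp [hcard.ne']

theorem dist_transferOp_iterate_le {C : ℝ} (hf : ∀ x y, dist (f x) (f y) ≤ C) (n : ℕ)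
    (x y : X) : dist ((transferOp T)^[n] f x) ((transferOp T)^[n] f y) ≤ C := by
  induction n generalizing x y with
  | zero => exact hf x y
  | succ n ih =>
    rw [Function.iterate_succ_apply']
    exact dist_transferOp_le_of_forall fun i => ih _ _

variable [PseudoMetricSpace X] {K L : ℝ≥0}

theorem LipschitzWith.transferOp (hT : ∀ i, LipschitzWith K (T i)) (hf : LipschitzWith L f) :
    LipschitzWith (L * K) (transferOp T f) :=
  LipschitzWith.of_dist_le_mul fun x y => dist_transferOp_le_of_forall fun i =>
    calc dist (f (T i x)) (f (T i y)) ≤ L * dist (T i x) (T i y) := hf.dist_le_mul _ _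
      _ ≤ L * (K * dist x y) := by gcongr; exact (hT i).dist_le_mul x y
      _ = ↑(L * K) * dist x y := by push_cast; ring

theorem LipschitzWith.transferOp_iterate (hT : ∀ i, LipschitzWith K (T i))
    (hf : LipschitzWith L f) (n : ℕ) : LipschitzWith (L * K ^ n) ((_root_.transferOp T)^[n] f) := by
  induction n with
  | zero => simpa using hf
  | succ n ih =>
    rw [Function.iterate_succ_apply', pow_succ, ← mul_assoc]
    exact ih.transferOp hT

theorem tendsto_transferOp_iterate_sub (hT : ∀ i, LipschitzWith K (T i)) (hK : K < 1)
    (hf : LipschitzWith L f) (x y : X) :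
    Tendsto (fun n => (transferOp T)^[n] f x - (transferOp T)^[n] f y) atTop (𝓝 0) := by
  have hlim : Tendsto (fun n => (L : ℝ) * (K : ℝ) ^ n * dist x y) atTop (𝓝 0) := by
    simpa using ((tendsto_pow_atTop_nhds_zero_of_lt_one K.coe_nonneg hK).const_mul
      (L : ℝ)).mul_const (dist x y)
  refine squeeze_zero_norm (fun n => ?_) hlim
  rw [← dist_eq_norm]
  simpa using (hf.transferOp_iterate hT n).dist_le_mul x y

end TransferOperator

section Invariance

variable [Fintype ι] [MeasurableSpace X] {T : ι → X → X} {ρ : Measure X} {f : X → ℝ}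

theorem IsIFSInvariant.integrable_map (hρ : IsIFSInvariant T ρ) (hf : Integrable f ρ) (i : ι) :
    Integrable f (ρ.map (T i)) := by
  have hsum : Integrable f (∑ i, ρ.map (T i)) := by
    rw [hρ, ← Nat.cast_smul_eq_nsmul ℝ≥0∞]; exact hf.smul_measure (ENNReal.natCast_ne_top _)
  exact integrable_finsetSum_measure.1 hsum i (Finset.mem_univ i)

theorem IsIFSInvariant.integrable_comp (hρ : IsIFSInvariant T ρ) (hT : ∀ i, Measurable (T i))
    (hf : Integrable f ρ) (i : ι) : Integrable (fun x => f (T i x)) ρ :=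
  (hρ.integrable_map hf i).comp_measurable (hT i)

theorem IsIFSInvariant.integrable_transferOp (hρ : IsIFSInvariant T ρ) (hT : ∀ i, Measurable (T i))
    (hf : Integrable f ρ) : Integrable (transferOp T f) ρ :=
  (integrable_finsetSum _ fun i _ => hρ.integrable_comp hT hf i).const_mul _

theorem IsIFSInvariant.integral_transferOp [Nonempty ι] (hρ : IsIFSInvariant T ρ)
    (hT : ∀ i, Measurable (T i)) (hf : Integrable f ρ) :
    ∫ x, transferOp T f x ∂ρ = ∫ x, f x ∂ρ := by
  have hcard : (Fintype.card ι : ℝ) ≠ 0 := Nat.cast_ne_zero.2 Fintype.card_ne_zero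
  have hsum : ∑ i, ∫ x, f (T i x) ∂ρ = Fintype.card ι * ∫ x, f x ∂ρ :=
    calc ∑ i, ∫ x, f (T i x) ∂ρ = ∑ i, ∫ x, f x ∂(ρ.map (T i)) :=
          Finset.sum_congr rfl fun i _ =>
            (integral_map (hT i).aemeasurable (hρ.integrable_map hf i).aestronglyMeasurable).symm
      _ = ∫ x, f x ∂(∑ i, ρ.map (T i)) :=
          (integral_finsetSum_measure fun i _ => hρ.integrable_map hf i).symm
      _ = Fintype.card ι * ∫ x, f x ∂ρ := by
          rw [hρ, ← Nat.cast_smul_eq_nsmul ℝ≥0∞, integral_smul_measure]; simp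
  simp only [transferOp]
  rw [integral_const_mul, integral_finsetSum _ fun i _ => hρ.integrable_comp hT hf i, hsum,
    inv_mul_cancel_left₀ hcard]

theorem IsIFSInvariant.integrable_transferOp_iterate (hρ : IsIFSInvariant T ρ)
    (hT : ∀ i, Measurable (T i)) (hf : Integrable f ρ) (n : ℕ) :
    Integrable ((transferOp T)^[n] f) ρ := by
  induction n with
  | zero => exact hf
  | succ n ih => rw [Function.iterate_succ_apply']; exact hρ.integrable_transferOp hT ih

theorem IsIFSInvariant.integral_transferOp_iterate [Nonempty ι] (hρ : IsIFSInvariant T ρ)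
    (hT : ∀ i, Measurable (T i)) (hf : Integrable f ρ) (n : ℕ) :
    ∫ x, (transferOp T)^[n] f x ∂ρ = ∫ x, f x ∂ρ := by
  induction n with
  | zero => rfl
  | succ n ih =>
    rw [Function.iterate_succ_apply',
      hρ.integral_transferOp hT (hρ.integrable_transferOp_iterate hT hf n), ih]

end Invariance

variable [Fintype ι] [Fintype κ]

theorem IsIFSInvariant.tendsto_transferOp_iterate [Nonempty ι] [PseudoMetricSpace X]
    [MeasurableSpace X] [BorelSpace X] {T : ι → X → X} {ρ : Measure X}
    [IsProbabilityMeasure ρ] (hρ : IsIFSInvariant T ρ) {K L : ℝ≥0}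
    (hT : ∀ i, LipschitzWith K (T i)) (hK : K < 1) {f : X → ℝ} (hf : LipschitzWith L f)
    {C : ℝ} (hfC : ∀ x y, dist (f x) (f y) ≤ C) (x₀ : X) :
    Tendsto (fun n => (transferOp T)^[n] f x₀) atTop (𝓝 (∫ x, f x ∂ρ)) := by
  have hTm : ∀ i, Measurable (T i) := fun i => (hT i).continuous.measurable
  have hfi : Integrable f ρ :=
    (BoundedContinuousFunction.mkOfBound ⟨f, hf.continuous⟩ C hfC).integrable ρ
  have hdiff : Tendsto (fun n => ∫ x, ((transferOp T)^[n] f x - (transferOp T)^[n] f x₀) ∂ρ)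
      atTop (𝓝 0) := by
    simpa using tendsto_integral_of_dominated_convergence (fun _ => C)
      (fun n => ((hf.transferOp_iterate hT n).continuous.sub continuous_const).aestronglyMeasurable)
      (integrable_const C)
      (fun n => ae_of_all _ fun x => by
        rw [Pi.sub_apply, ← dist_eq_norm]; exact dist_transferOp_iterate_le hfC n x x₀)
      (ae_of_all _ fun x => tendsto_transferOp_iterate_sub hT hK hf x x₀)
  have hint : ∀ n, ∫ x, ((transferOp T)^[n] f x - (transferOp T)^[n] f x₀) ∂ρ =
      ∫ x, f x ∂ρ - (transferOp T)^[n] f x₀ := fun n => by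
    rw [integral_sub (hρ.integrable_transferOp_iterate hTm hfi n) (integrable_const _),
      hρ.integral_transferOp_iterate hTm hfi n, integral_const, probReal_univ, one_smul]
  simp_rw [hint] at hdiff
  simpa using (tendsto_const_nhds (x := ∫ x, f x ∂ρ)).sub hdiff

theorem MeasureTheory.Measure.ext_of_forall_lipschitz_integral_eq [PseudoMetricSpace X]
    [MeasurableSpace X] [BorelSpace X] {μ ν : Measure X} [IsProbabilityMeasure μ]
    [IsProbabilityMeasure ν]
    (h : ∀ f : X → ℝ, (∃ C, ∀ x y, dist (f x) (f y) ≤ C) → (∃ L, LipschitzWith L f) →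
      ∫ x, f x ∂μ = ∫ x, f x ∂ν) : μ = ν := by
  -- the constant sequence `μ` converges weakly to `ν` by the Lipschitz portmanteau criterion
  let μ' : ProbabilityMeasure X := ⟨μ, ‹_›⟩
  let ν' : ProbabilityMeasure X := ⟨ν, ‹_›⟩
  have hlim : Tendsto (fun _ : ℕ => μ') atTop (𝓝 ν') :=
    tendsto_iff_forall_lipschitz_integral_tendsto.2 fun f hb hL => by
      simp [μ', ν', h f hb hL]
  exact congrArg ProbabilityMeasure.toMeasure
    (tendsto_nhds_unique (X := ProbabilityMeasure X) tendsto_const_nhds hlim)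

theorem IsIFSInvariant.unique [Nonempty ι] [PseudoMetricSpace X] [MeasurableSpace X] [BorelSpace X]
    {T : ι → X → X} {K : ℝ≥0} (hT : ∀ i, LipschitzWith K (T i)) (hK : K < 1)
    {ρ σ : Measure X} [IsProbabilityMeasure ρ] [IsProbabilityMeasure σ]
    (hρ : IsIFSInvariant T ρ) (hσ : IsIFSInvariant T σ) : ρ = σ := by
  obtain ⟨x₀⟩ := nonempty_of_isProbabilityMeasure ρ
  exact Measure.ext_of_forall_lipschitz_integral_eq fun f ⟨C, hC⟩ ⟨L, hL⟩ =>
    tendsto_nhds_unique (hρ.tendsto_transferOp_iterate hT hK hL hC x₀)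
      (hσ.tendsto_transferOp_iterate hT hK hL hC x₀)

theorem IsIFSInvariant.prod [MeasurableSpace X] [MeasurableSpace Y] {S : ι → X → X}
    {T : κ → Y → Y} (hS : ∀ i, Measurable (S i)) (hT : ∀ j, Measurable (T j))
    {μ : Measure X} {ν : Measure Y} [SFinite μ] [SFinite ν]
    (hμ : IsIFSInvariant S μ) (hν : IsIFSInvariant T ν) :
    IsIFSInvariant (prodMaps S T) (μ.prod ν) :=
  calc ∑ p : ι × κ, (μ.prod ν).map (prodMaps S T p)
      = ∑ p : ι × κ, (μ.map (S p.1)).prod (ν.map (T p.2)) :=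
        Finset.sum_congr rfl fun p _ => (Measure.map_prod_map μ ν (hS p.1) (hT p.2)).symm
    _ = (∑ i, μ.map (S i)).prod (∑ j, ν.map (T j)) := by
        rw [← Measure.sum_fintype (fun i => μ.map (S i)),
          ← Measure.sum_fintype (fun j => ν.map (T j)), Measure.prod_sum, Measure.sum_fintype]
    _ = Fintype.card (ι × κ) • μ.prod ν := by
        rw [hμ, hν, Measure.prod_smul_left, Measure.prod_smul_right, smul_smul,
          Fintype.card_prod]

theorem integral_sum_map_eq_sum_integral {𝕜 : Type*} [RCLike 𝕜]
    [MeasurableSpace X] [TopologicalSpace X] [OpensMeasurableSpace X] {T : ι → X → X}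
    (hT : ∀ i, Measurable (T i)) (ρ : Measure X) [IsFiniteMeasure ρ] (f : X →ᵇ 𝕜) :
    ∫ x, f x ∂(∑ i, ρ.map (T i)) = ∑ i, ∫ x, f (T i x) ∂ρ := by
  rw [integral_finsetSum_measure fun i _ => f.integrable _]
  exact Finset.sum_congr rfl fun i _ =>
    integral_map (hT i).aemeasurable f.continuous.aestronglyMeasurable

theorem isIFSInvariant_iff_integral_eq [Nonempty ι] [MeasurableSpace X] [TopologicalSpace X]
    [HasOuterApproxClosed X] [BorelSpace X] {T : ι → X → X} (hT : ∀ i, Measurable (T i))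
    (ρ : Measure X) [IsFiniteMeasure ρ] :
    IsIFSInvariant T ρ ↔ ∀ f : X → ℂ, Continuous f → (∃ C : ℝ, ∀ x, ‖f x‖ ≤ C) →
      ∫ x, f x ∂ρ = (Fintype.card ι : ℂ)⁻¹ * ∑ i, ∫ x, f (T i x) ∂ρ := by
  have hcard : (Fintype.card ι : ℂ) ≠ 0 := Nat.cast_ne_zero.2 Fintype.card_ne_zero
  constructor
  · rintro hρ f hf ⟨C, hC⟩
    have h := integral_sum_map_eq_sum_integral hT ρ (.ofNormedAddCommGroup f hf C hC)
    rw [hρ, ← Nat.cast_smul_eq_nsmul ℝ≥0∞, integral_smul_measure] at h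
    simp only [BoundedContinuousFunction.coe_ofNormedAddCommGroup, ENNReal.toReal_natCast,
      Complex.real_smul, Complex.ofReal_natCast] at h
    rw [← h, inv_mul_cancel_left₀ hcard]
  · intro h
    refine ext_of_forall_integral_eq_of_IsFiniteMeasure fun g => ?_
    have hg := h (fun x => (g x : ℂ)) (Complex.continuous_ofReal.comp g.continuous)
      ⟨‖g‖, fun x => by simpa using g.norm_coe_le_norm x⟩
    simp only [integral_complex_ofReal] at hg
    rw [integral_sum_map_eq_sum_integral hT ρ g, ← Nat.cast_smul_eq_nsmul ℝ≥0∞,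
      integral_smul_measure, ENNReal.toReal_natCast, smul_eq_mul]
    rw [eq_inv_mul_iff_mul_eq₀ hcard] at hg
    exact_mod_cast hg.symm

theorem map_add_div_volume_restrict_Icc {c : ℝ} (hc : 0 < c) (b : ℝ) :
    (volume.restrict (Icc (0 : ℝ) 1)).map (fun y => (y + b) / c) =
      ENNReal.ofReal c • volume.restrict (Icc (b / c) ((1 + b) / c)) := by
  have hmeas : Measurable fun y : ℝ => (y + b) / c := by fun_prop
  have hpre : (fun y : ℝ => (y + b) / c) ⁻¹' Icc (b / c) ((1 + b) / c) = Icc 0 1 := by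
    ext y
    simp only [mem_preimage, mem_Icc, div_le_div_iff_of_pos_right hc]
    constructor <;> rintro ⟨h₁, h₂⟩ <;> constructor <;> linarith
  have hvol : volume.map (fun y : ℝ => (y + b) / c) = ENNReal.ofReal c • volume := by
    have hcomp : (fun y : ℝ => (y + b) / c) = (fun y => c⁻¹ * y) ∘ (fun y => y + b) := by
      ext y; simp [div_eq_inv_mul]
    rw [hcomp, ← Measure.map_map (by fun_prop) (by fun_prop), map_add_right_eq_self,
      Real.map_volume_mul_left (inv_ne_zero hc.ne'), inv_inv, abs_of_pos hc]
  rw [← hpre, ← Measure.restrict_map hmeas measurableSet_Icc, hvol, Measure.restrict_smul]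

theorem lipschitzWith_add_div (b : ℝ) {c : ℝ} (hc : 2 ≤ c) :
    LipschitzWith 2⁻¹ fun x : ℝ => (x + b) / c :=
  LipschitzWith.of_dist_le_mul fun x y =>
    calc dist ((x + b) / c) ((y + b) / c) = dist x y / c := by
          rw [Real.dist_eq, Real.dist_eq, ← sub_div, add_sub_add_right_eq_sub, abs_div,
            abs_of_pos (by linarith : (0 : ℝ) < c)]
      _ ≤ dist x y / 2 := div_le_div_of_nonneg_left dist_nonneg two_pos hc
      _ = ((2⁻¹ : ℝ≥0) : ℝ) * dist x y := by push_cast; ring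

noncomputable def cantorMaps : Fin 2 → ℝ → ℝ := ![fun x => x / 4, fun x => (x + 2) / 4]

noncomputable def dyadicMaps : Fin 2 → ℝ → ℝ := ![fun y => y / 2, fun y => (y + 1) / 2]

theorem lipschitzWith_cantorMaps : ∀ i, LipschitzWith 2⁻¹ (cantorMaps i) := by
  simp only [Fin.forall_fin_two, cantorMaps, Matrix.cons_val_zero, Matrix.cons_val_one]
  exact ⟨by simpa using lipschitzWith_add_div 0 (by norm_num : (2 : ℝ) ≤ 4),
    lipschitzWith_add_div 2 (by norm_num)⟩

theorem lipschitzWith_dyadicMaps : ∀ i, LipschitzWith 2⁻¹ (dyadicMaps i) := by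
  simp only [Fin.forall_fin_two, dyadicMaps, Matrix.cons_val_zero, Matrix.cons_val_one]
  exact ⟨by simpa using lipschitzWith_add_div 0 le_rfl, lipschitzWith_add_div 1 le_rfl⟩

theorem isIFSInvariant_dyadicMaps_volume :
    IsIFSInvariant dyadicMaps (volume.restrict (Icc (0 : ℝ) 1)) := by
  have h₀ := map_add_div_volume_restrict_Icc two_pos 0
  have h₁ := map_add_div_volume_restrict_Icc two_pos 1
  simp only [add_zero, zero_div] at h₀
  have hsplit : volume.restrict (Icc (0 : ℝ) (1 / 2)) + volume.restrict (Icc (1 / 2 : ℝ) 1) =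
      volume.restrict (Icc (0 : ℝ) 1) := by
    rw [← restrict_Ioc_eq_restrict_Icc, ← restrict_Ioc_eq_restrict_Icc,
      ← restrict_Ioc_eq_restrict_Icc,
      ← Measure.restrict_union (Ioc_disjoint_Ioc_of_le le_rfl) measurableSet_Ioc,
      Ioc_union_Ioc_eq_Ioc (by norm_num) (by norm_num)]
  rw [IsIFSInvariant, Fin.sum_univ_two]
  simp only [dyadicMaps, Matrix.cons_val_zero, Matrix.cons_val_one]
  rw [h₀, h₁, ← smul_add]
  norm_num [hsplit, ← Nat.cast_smul_eq_nsmul ℝ≥0∞]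

theorem isInvariant2D_iff (ρ : Measure (ℝ × ℝ)) [IsFiniteMeasure ρ] :
    IsInvariant2D ρ ↔ IsIFSInvariant (prodMaps cantorMaps dyadicMaps) ρ := by
  have hT := LipschitzWith.prodMaps lipschitzWith_cantorMaps lipschitzWith_dyadicMaps
  rw [isIFSInvariant_iff_integral_eq fun p => (hT p).continuous.measurable]
  refine forall₃_congr fun f _ _ => ?_
  have hsum : ∑ j : Fin 4, ∫ z, f (Ups j z) ∂ρ =
      ∑ p : Fin 2 × Fin 2, ∫ z, f (prodMaps cantorMaps dyadicMaps p z) ∂ρ := by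
    simp only [Fin.sum_univ_four, Fintype.sum_prod_type, Fin.sum_univ_two]
    change _ = ∫ z, f (Ups 0 z) ∂ρ + ∫ z, f (Ups 2 z) ∂ρ +
      (∫ z, f (Ups 1 z) ∂ρ + ∫ z, f (Ups 3 z) ∂ρ)
    abel
  rw [hsum]
  norm_num

instance : IsProbabilityMeasure (volume.restrict (Icc (0 : ℝ) 1)) := ⟨by simp⟩

/-- If μ₄ is the (unique) probability measure on ℝ invariant under
τ₀(x)=x/4, τ₂(x)=(x+2)/4 with equal weights 1/2, and λ is Lebesgue measure restricted
to [0,1], then μ₄ × λ is the unique invariant probability measure of the IFS `Ups`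
with equal weights 1/4. -/
theorem prod_measure_invariant_unique
    (μ₄ : Measure ℝ) [IsProbabilityMeasure μ₄]
    (hμ₄ : ∀ f : ℝ → ℂ, Continuous f → (∃ C : ℝ, ∀ x, ‖f x‖ ≤ C) →
      ∫ x, f x ∂μ₄ =
        (1 / 2 : ℂ) * (∫ x, f (x / 4) ∂μ₄ + ∫ x, f ((x + 2) / 4) ∂μ₄)) :
    IsInvariant2D (μ₄.prod (volume.restrict (Icc (0 : ℝ) 1))) ∧
      ∀ ρ : Measure (ℝ × ℝ), IsProbabilityMeasure ρ → IsInvariant2D ρ →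
        ρ = μ₄.prod (volume.restrict (Icc (0 : ℝ) 1)) := by
  have hcantor : IsIFSInvariant cantorMaps μ₄ :=
    (isIFSInvariant_iff_integral_eq (fun i => (lipschitzWith_cantorMaps i).continuous.measurable)
      μ₄).2 fun f hf hfC => by simpa [Fin.sum_univ_two, cantorMaps] using hμ₄ f hf hfC
  have hprod : IsIFSInvariant (prodMaps cantorMaps dyadicMaps)
      (μ₄.prod (volume.restrict (Icc (0 : ℝ) 1))) :=
    hcantor.prod (fun i => (lipschitzWith_cantorMaps i).continuous.measurable)
      (fun i => (lipschitzWith_dyadicMaps i).continuous.measurable) isIFSInvariant_dyadicMaps_volume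
  refine ⟨(isInvariant2D_iff _).2 hprod, fun ρ _ hρ => ?_⟩
  exact ((isInvariant2D_iff ρ).1 hρ).unique
    (LipschitzWith.prodMaps lipschitzWith_cantorMaps lipschitzWith_dyadicMaps) (by norm_num) hprod
end

section
/- Under the hypotheses of the preceding setup, the isometries S_0, S_1, S_2, S_3 satisfy the Cuntz relations: S_j* S_k = δ_{jk} I and Σ_{k=0}^{3} S_k S_k* = I, giving a representation of the Cuntz algebra O_4 on L²(μ_4 × λ). -/
open MeasureTheory Set
open scoped ENNReal NNReal ComplexConjugate

/-- The common left inverse `R(x,y) = (4x mod 1, 2y mod 1)` of the maps `Ups j`. -/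
noncomputable def Rmap : ℝ × ℝ → ℝ × ℝ :=
  fun z => (Int.fract (4 * z.1), Int.fract (2 * z.2))

/-- The operator `S_j f = 2 m_j ⋅ (f ∘ R)` at the level of functions. -/
noncomputable def Sop (m : Fin 4 → ℝ × ℝ → ℂ) (j : Fin 4) (f : ℝ × ℝ → ℂ) :
    ℝ × ℝ → ℂ :=
  fun z => 2 * m j z * f (Rmap z)

/-- The adjoint operator `S_j* f = (1/2) Σ_k conj(m_j ∘ Υ_k) ⋅ (f ∘ Υ_k)` at the level
of functions. -/
noncomputable def Sadj (m : Fin 4 → ℝ × ℝ → ℂ) (j : Fin 4) (f : ℝ × ℝ → ℂ) :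
    ℝ × ℝ → ℂ :=
  fun z => (1 / 2 : ℂ) * ∑ k : Fin 4, conj (m j (Ups k z)) * f (Ups k z)

/-!
Both relations are checked pointwise, almost everywhere. On `[0,1)²` every branch `Υ_ℓ` is a
right inverse of `R`, so `S_j* S_k f (z)` is `f z` times the inner product of rows `k` and `j`
of the unitary matrix `M(z)`. Writing `z = Υ_ℓ₀ (R z)`, the sum `Σ_k S_k S_k* f (z)` collapses
through the inner products of the columns of `M(R z)` to `f (Υ_ℓ₀ (R z)) = f z`; this needs
unitarity of `M` at `R z` for a.e. `z`, which holds because `R` preserves `μ₄ × λ`: each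
coordinate map `x ↦ fract (a x)` preserves the invariant measure of the IFS
`{x ↦ x / a, x ↦ (x + n) / a}` as soon as that measure lives on `[0,1)`.
-/

theorem Real.map_volume_add_div (c : ℝ) {a : ℝ} (ha : a ≠ 0) :
    (volume : Measure ℝ).map (fun x => (x + c) / a) = ENNReal.ofReal |a| • volume := by
  have : (fun x : ℝ => (x + c) / a) = (fun x => x * a⁻¹) ∘ (fun x => x + c) := by
    funext x; simp [div_eq_mul_inv]
  rw [this, ← Measure.map_map (by fun_prop) (by fun_prop), map_add_right_eq_self,
    Real.map_volume_mul_right (inv_ne_zero ha), inv_inv]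

theorem eq_half_smul_map_add_map_of_lintegral {α : Type*} [MeasurableSpace α]
    {μ : Measure α} {g₁ g₂ : α → α} (hg₁ : Measurable g₁) (hg₂ : Measurable g₂)
    (h : ∀ f : α → ℝ≥0∞, Measurable f →
      ∫⁻ x, f x ∂μ = (1 / 2) * (∫⁻ x, f (g₁ x) ∂μ + ∫⁻ x, f (g₂ x) ∂μ)) :
    μ = (2 : ℝ≥0∞)⁻¹ • (μ.map g₁ + μ.map g₂) := by
  refine Measure.ext_of_lintegral _ fun f hf => ?_
  rw [lintegral_smul_measure, lintegral_add_measure, lintegral_map hf hg₁,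
    lintegral_map hf hg₂, h f hf, one_div, smul_eq_mul]

def IsHutchinsonInvariant (μ : Measure ℝ) (a : ℝ) (n : ℤ) : Prop :=
  μ = (2 : ℝ≥0∞)⁻¹ • (μ.map (· / a) + μ.map (fun x => (x + n) / a))

theorem isHutchinsonInvariant_volume_restrict_Ico :
    IsHutchinsonInvariant (volume.restrict (Ico (0 : ℝ) 1)) 2 1 := by
  have hpre₁ : (fun x : ℝ => (x + 0) / 2) ⁻¹' Ico 0 (1 / 2) = Ico 0 1 := by
    ext x; simp only [mem_preimage, mem_Ico]
    constructor <;> rintro ⟨h, h'⟩ <;> constructor <;> linarith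
  have hpre₂ : (fun x : ℝ => (x + ((1 : ℤ) : ℝ)) / 2) ⁻¹' Ico (1 / 2) 1 = Ico 0 1 := by
    ext x; simp only [mem_preimage, mem_Ico, Int.cast_one]
    constructor <;> rintro ⟨h, h'⟩ <;> constructor <;> linarith
  have h₁ : (volume.restrict (Ico (0 : ℝ) 1)).map (fun x => (x + 0) / 2) =
      (2 : ℝ≥0∞) • volume.restrict (Ico 0 (1 / 2)) := by
    rw [← hpre₁, ← Measure.restrict_map (by fun_prop) measurableSet_Ico,
      Real.map_volume_add_div _ two_ne_zero, Measure.restrict_smul]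
    norm_num
  have h₂ : (volume.restrict (Ico (0 : ℝ) 1)).map (fun x => (x + ((1 : ℤ) : ℝ)) / 2) =
      (2 : ℝ≥0∞) • volume.restrict (Ico (1 / 2) 1) := by
    rw [← hpre₂, ← Measure.restrict_map (by fun_prop) measurableSet_Ico,
      Real.map_volume_add_div _ two_ne_zero, Measure.restrict_smul]
    norm_num
  simp only [add_zero] at h₁
  rw [IsHutchinsonInvariant, h₁, h₂, ← smul_add, smul_smul,
    ENNReal.inv_mul_cancel two_ne_zero ENNReal.ofNat_ne_top, one_smul,
    ← Measure.restrict_union Ico_disjoint_Ico_same measurableSet_Ico,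
    Ico_union_Ico_eq_Ico (by norm_num) (by norm_num)]

namespace IsHutchinsonInvariant

variable {μ : Measure ℝ} {a : ℝ} {n : ℤ}

theorem ae_mem_Ico (hμ : IsHutchinsonInvariant μ a n) (hn : 0 ≤ n) (han : 1 < a - n)
    (hsupp : μ (Icc (0 : ℝ) 1)ᶜ = 0) :
    ∀ᵐ x ∂μ, x ∈ Ico (0 : ℝ) 1 := by
  have hn' : (0 : ℝ) ≤ n := Int.cast_nonneg hn
  have ha : a ≠ 0 := by intro h; linarith
  -- The mass at `1` is carried over from the points `a` and `a - n`, which lie outside `[0,1]`.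
  have hone : μ {1} = 0 := by
    rw [hμ, Measure.smul_apply, Measure.add_apply,
      Measure.map_apply (by fun_prop) (measurableSet_singleton _),
      Measure.map_apply (by fun_prop) (measurableSet_singleton _),
      measure_mono_null _ hsupp, measure_mono_null _ hsupp, add_zero, smul_zero]
    all_goals
      intro x hx h
      simp only [mem_preimage, mem_singleton_iff, div_eq_one_iff_eq ha] at hx
      linarith [h.2]
  refine measure_mono_null (fun x hx => ?_) (measure_union_null hsupp hone)
  by_cases h : x ∈ Icc 0 1
  · exact Or.inr (le_antisymm h.2 (not_lt.1 fun h' => hx ⟨h.1, h'⟩))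
  · exact Or.inl h

theorem measurePreserving_fract_mul (hμ : IsHutchinsonInvariant μ a n) (ha : a ≠ 0)
    (h01 : ∀ᵐ x ∂μ, x ∈ Ico (0 : ℝ) 1) :
    MeasurePreserving (fun x => Int.fract (a * x)) μ μ := by
  have hF : Measurable fun x : ℝ => Int.fract (a * x) := by fun_prop
  have hfract : μ.map Int.fract = μ := by
    conv_rhs => rw [← Measure.map_id (μ := μ)]
    exact Measure.map_congr (h01.mono fun x hx => Int.fract_eq_self.2 hx)
  have h₁ : (fun x => Int.fract (a * x)) ∘ (· / a) = Int.fract := by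
    funext x; simp [mul_div_cancel₀ _ ha]
  have h₂ : (fun x => Int.fract (a * x)) ∘ (fun x => (x + n) / a) = Int.fract := by
    funext x; simp [mul_div_cancel₀ _ ha]
  refine ⟨hF, ?_⟩
  conv_lhs => rw [hμ]
  rw [Measure.map_smul, Measure.map_add _ _ hF, Measure.map_map hF (by fun_prop),
    Measure.map_map hF (by fun_prop), h₁, h₂, hfract, ← two_smul ℝ≥0∞ μ, smul_smul,
    ENNReal.inv_mul_cancel two_ne_zero ENNReal.ofNat_ne_top, one_smul]

end IsHutchinsonInvariant

theorem Matrix.sum_mul_star_of_mem_unitaryGroup {n α : Type*} [Fintype n] [DecidableEq n]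
    [CommRing α] [StarRing α] {U : Matrix n n α} (hU : U ∈ Matrix.unitaryGroup n α) (i j : n) :
    ∑ k, U i k * star (U j k) = if i = j then 1 else 0 := by
  simpa [Matrix.mul_apply, Matrix.one_apply] using
    congrFun₂ (Matrix.mem_unitaryGroup_iff.mp hU) i j

theorem Matrix.sum_star_mul_of_mem_unitaryGroup {n α : Type*} [Fintype n] [DecidableEq n]
    [CommRing α] [StarRing α] {U : Matrix n n α} (hU : U ∈ Matrix.unitaryGroup n α) (i j : n) :
    ∑ k, star (U k i) * U k j = if i = j then 1 else 0 := by
  simpa [Matrix.mul_apply, Matrix.one_apply] using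
    congrFun₂ (Matrix.mem_unitaryGroup_iff'.mp hU) i j

theorem Rmap_Ups (ℓ : Fin 4) {z : ℝ × ℝ} (hz : z ∈ Ico (0 : ℝ) 1 ×ˢ Ico (0 : ℝ) 1) :
    Rmap (Ups ℓ z) = z := by
  obtain ⟨hx, hy⟩ := hz
  fin_cases ℓ <;> ext <;>
    simp [Ups, Rmap, mul_div_cancel₀, Int.fract_eq_self.2 hx, Int.fract_eq_self.2 hy]

theorem Sadj_Sop_apply (m : Fin 4 → ℝ × ℝ → ℂ) (j k : Fin 4) (f : ℝ × ℝ → ℂ) {z : ℝ × ℝ}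
    (hR : ∀ ℓ, Rmap (Ups ℓ z) = z)
    (hU : (Matrix.of fun j k : Fin 4 => m j (Ups k z)) ∈ Matrix.unitaryGroup (Fin 4) ℂ) :
    Sadj m j (Sop m k f) z = (if j = k then 1 else 0) * f z := by
  have hrows := Matrix.sum_mul_star_of_mem_unitaryGroup hU k j
  simp only [Matrix.of_apply, Complex.star_def] at hrows
  calc Sadj m j (Sop m k f) z
      = (∑ ℓ, m k (Ups ℓ z) * conj (m j (Ups ℓ z))) * f z := by
        simp only [Sadj, Sop, hR, Finset.mul_sum, Finset.sum_mul]
        exact Finset.sum_congr rfl fun ℓ _ => by ring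
    _ = (if j = k then 1 else 0) * f z := by simp only [hrows, eq_comm (a := k)]

theorem sum_Sop_Sadj_apply (m : Fin 4 → ℝ × ℝ → ℂ) (f : ℝ × ℝ → ℂ) {z : ℝ × ℝ} {ℓ₀ : Fin 4}
    (hz : Ups ℓ₀ (Rmap z) = z)
    (hU : (Matrix.of fun j k : Fin 4 => m j (Ups k (Rmap z))) ∈ Matrix.unitaryGroup (Fin 4) ℂ) :
    ∑ k, Sop m k (Sadj m k f) z = f z := by
  simp only [Sop]
  generalize Rmap z = w at hz hU
  subst hz
  have hcols := Matrix.sum_star_mul_of_mem_unitaryGroup hU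
  simp only [Matrix.of_apply, Complex.star_def] at hcols
  calc ∑ k, 2 * m k (Ups ℓ₀ w) * Sadj m k f w
      = ∑ ℓ, (∑ k, conj (m k (Ups ℓ w)) * m k (Ups ℓ₀ w)) * f (Ups ℓ w) := by
        simp only [Sadj, Finset.mul_sum, Finset.sum_mul]
        rw [Finset.sum_comm]
        exact Finset.sum_congr rfl fun ℓ _ => Finset.sum_congr rfl fun k _ => by ring
    _ = f (Ups ℓ₀ w) := by simp [hcols]

theorem Sj_cuntz_relations_general
    (μ₄ : Measure ℝ) [IsProbabilityMeasure μ₄]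
    (hμ₄ : ∀ f : ℝ → ℝ≥0∞, Measurable f →
      ∫⁻ x, f x ∂μ₄ =
        (1 / 2) * (∫⁻ x, f (x / 4) ∂μ₄ + ∫⁻ x, f ((x + 2) / 4) ∂μ₄))
    (hsupp : μ₄ (Icc (0 : ℝ) 1)ᶜ = 0)
    (m : Fin 4 → ℝ × ℝ → ℂ)
    (hM : ∀ᵐ z ∂(μ₄.prod (volume.restrict (Icc (0 : ℝ) 1))),
      (Matrix.of fun j k : Fin 4 => m j (Ups k z)) ∈ Matrix.unitaryGroup (Fin 4) ℂ)
    (hsur : ∀ᵐ z ∂(μ₄.prod (volume.restrict (Icc (0 : ℝ) 1))),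
      ∃ ℓ : Fin 4, Ups ℓ (Rmap z) = z) :
    (∀ j k : Fin 4, ∀ f : ℝ × ℝ → ℂ,
      ∀ᵐ z ∂(μ₄.prod (volume.restrict (Icc (0 : ℝ) 1))),
        Sadj m j (Sop m k f) z = (if j = k then 1 else 0) * f z) ∧
    (∀ f : ℝ × ℝ → ℂ,
      ∀ᵐ z ∂(μ₄.prod (volume.restrict (Icc (0 : ℝ) 1))),
        ∑ k : Fin 4, Sop m k (Sadj m k f) z = f z) := by
  have hμ₄' : IsHutchinsonInvariant μ₄ 4 2 :=
    eq_half_smul_map_add_map_of_lintegral (by fun_prop) (by fun_prop) (by simpa using hμ₄)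
  have hx01 : ∀ᵐ x ∂μ₄, x ∈ Ico (0 : ℝ) 1 := hμ₄'.ae_mem_Ico (by norm_num) (by norm_num) hsupp
  have hIcc : volume.restrict (Icc (0 : ℝ) 1) = volume.restrict (Ico 0 1) :=
    Measure.restrict_congr_set Ico_ae_eq_Icc.symm
  have hy01 : ∀ᵐ y ∂volume.restrict (Icc (0 : ℝ) 1), y ∈ Ico (0 : ℝ) 1 := by
    rw [hIcc]; exact ae_restrict_mem measurableSet_Ico
  have hR : MeasurePreserving Rmap (μ₄.prod (volume.restrict (Icc (0 : ℝ) 1)))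
      (μ₄.prod (volume.restrict (Icc (0 : ℝ) 1))) := by
    change MeasurePreserving (Prod.map (fun x => Int.fract (4 * x)) (fun y => Int.fract (2 * y)))
      _ _
    refine (hμ₄'.measurePreserving_fract_mul (by norm_num) hx01).prod ?_
    rw [hIcc]
    exact isHutchinsonInvariant_volume_restrict_Ico.measurePreserving_fract_mul two_ne_zero
      (ae_restrict_mem measurableSet_Ico)
  have hsquare := (Measure.quasiMeasurePreserving_fst.ae hx01).and
    (Measure.quasiMeasurePreserving_snd.ae hy01)
  refine ⟨fun j k f => ?_, fun f => ?_⟩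
  · filter_upwards [hsquare, hM] with z hz hU
    exact Sadj_Sop_apply m j k f (fun ℓ => Rmap_Ups ℓ hz) hU
  · filter_upwards [hsur, hR.quasiMeasurePreserving.ae hM] with z ⟨ℓ₀, hz⟩ hU
    exact sum_Sop_Sadj_apply m f hz hU

/-- the isometries `S_j` satisfy the Cuntz relations
`S_j* S_k = δ_{jk} I` and `Σ_k S_k S_k* = I` on `L²(μ₄ × λ)`, giving a representation of
the Cuntz algebra 𝒪₄.  Both relations are expressed as a.e.-pointwise identities. -/
theorem Sj_cuntz_relations
    (μ₄ : Measure ℝ) [IsProbabilityMeasure μ₄]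
    (hμ₄ : ∀ f : ℝ → ℝ≥0∞, Measurable f →
      ∫⁻ x, f x ∂μ₄ =
        (1 / 2) * (∫⁻ x, f (x / 4) ∂μ₄ + ∫⁻ x, f ((x + 2) / 4) ∂μ₄))
    (hsupp : μ₄ (Icc (0 : ℝ) 1)ᶜ = 0)
    (m : Fin 4 → ℝ × ℝ → ℂ) (hm : ∀ j, Measurable (m j))
    (hM : ∀ᵐ z ∂(μ₄.prod (volume.restrict (Icc (0 : ℝ) 1))),
      (Matrix.of fun j k : Fin 4 => m j (Ups k z)) ∈ Matrix.unitaryGroup (Fin 4) ℂ)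
    (hsur : ∀ᵐ z ∂(μ₄.prod (volume.restrict (Icc (0 : ℝ) 1))),
      ∃ ℓ : Fin 4, Ups ℓ (Rmap z) = z) :
    (∀ j k : Fin 4, ∀ f : ℝ × ℝ → ℂ,
      ∀ᵐ z ∂(μ₄.prod (volume.restrict (Icc (0 : ℝ) 1))),
        Sadj m j (Sop m k f) z = (if j = k then 1 else 0) * f z) ∧
    (∀ f : ℝ × ℝ → ℂ,
      ∀ᵐ z ∂(μ₄.prod (volume.restrict (Icc (0 : ℝ) 1))),
        ∑ k : Fin 4, Sop m k (Sadj m k f) z = f z) :=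
  Sj_cuntz_relations_general μ₄ hμ₄ hsupp m hM hsur
end

section
/- Fix α_{00} = 1, α_{01} = α_{02} = 0. The system of equations: |α_{j0}|² + |α_{j1}|² + |α_{j2}|² = 1 for j = 1,2,3; α_{20} = 0; α_{11}·conj(α_{22}) + α_{12}·conj(α_{21}) = 0; α_{10}·conj(α_{30}) + α_{11}·conj(α_{31}) + α_{12}·conj(α_{32}) = 0; α_{21}·conj(α_{32}) + α_{22}·conj(α_{31}) = 0, has a solution (in the remaining variables α_{11}, α_{12}, α_{21}, α_{22}, α_{31}, α_{32}) for given α_{10}, α_{30} ∈ ℂ if and only if |α_{10}|² + |α_{30}|² = 1. -/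
open scoped ComplexConjugate

/-! Write `u = (α₁₁, α₁₂)`, `v = (α₂₂, α₂₁)` and `w = (α₃₁, α₃₂)`. The second row makes `v` a unit
vector and two of the orthogonality relations say `⟪u, v⟫ = ⟪w, v⟫ = 0`, so `u` and `w` are
parallel in `ℂ²`. By Lagrange's identity `‖⟪u, w⟫‖ = ‖u‖ ‖w‖`, and the remaining relation
`α₁₀ conj α₃₀ = -⟪u, w⟫` turns this into `|α₁₀|² |α₃₀|² = (1 - |α₁₀|²) (1 - |α₃₀|²)`. -/

theorem mul_sub_mul_eq_zero_of_common_root {R : Type*} [CommRing R] [NoZeroDivisors R]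
    {b c h k x y : R} (hbc : b * x + c * y = 0) (hhk : h * x + k * y = 0)
    (hxy : x ≠ 0 ∨ y ≠ 0) : b * k - c * h = 0 := by
  rcases hxy with hx | hy
  · refine (mul_eq_zero.mp ?_).resolve_left hx
    linear_combination k * hbc - c * hhk
  · refine (mul_eq_zero.mp ?_).resolve_left hy
    linear_combination b * hhk - h * hbc

theorem Complex.lagrange_identity (b c h k : ℂ) :
    ‖b * conj h + c * conj k‖ ^ 2 + ‖b * k - c * h‖ ^ 2 =
      (‖b‖ ^ 2 + ‖c‖ ^ 2) * (‖h‖ ^ 2 + ‖k‖ ^ 2) := by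
  apply Complex.ofReal_injective
  push_cast
  simp only [← Complex.mul_conj', map_add, map_sub, map_mul, Complex.conj_conj]
  ring

/-- with `α₀₀ = 1`, `α₀₁ = α₀₂ = 0` fixed, the unitarity system
(in the remaining coefficients) has a solution for given `α₁₀, α₃₀ ∈ ℂ` if and only if
`|α₁₀|² + |α₃₀|² = 1`. -/
theorem unitarity_system_solvable (α₁₀ α₃₀ : ℂ) :
    (∃ α₂₀ α₁₁ α₁₂ α₂₁ α₂₂ α₃₁ α₃₂ : ℂ,
      ‖α₁₀‖ ^ 2 + ‖α₁₁‖ ^ 2 + ‖α₁₂‖ ^ 2 = 1 ∧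
      ‖α₂₀‖ ^ 2 + ‖α₂₁‖ ^ 2 + ‖α₂₂‖ ^ 2 = 1 ∧
      ‖α₃₀‖ ^ 2 + ‖α₃₁‖ ^ 2 + ‖α₃₂‖ ^ 2 = 1 ∧
      α₂₀ = 0 ∧
      α₁₁ * conj α₂₂ + α₁₂ * conj α₂₁ = 0 ∧
      α₁₀ * conj α₃₀ + α₁₁ * conj α₃₁ + α₁₂ * conj α₃₂ = 0 ∧
      α₂₁ * conj α₃₂ + α₂₂ * conj α₃₁ = 0) ↔
    ‖α₁₀‖ ^ 2 + ‖α₃₀‖ ^ 2 = 1 := by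
  constructor
  · rintro ⟨_, α₁₁, α₁₂, α₂₁, α₂₂, α₃₁, α₃₂, row₁, row₂, row₃, rfl, orth₁₂, orth₁₃, orth₂₃⟩
    have orth₃₂ : α₃₁ * conj α₂₂ + α₃₂ * conj α₂₁ = 0 := by
      simpa [add_comm, mul_comm] using congrArg conj orth₂₃
    have v_ne_zero : conj α₂₂ ≠ 0 ∨ conj α₂₁ ≠ 0 := by
      by_contra! hv
      simp_all
    have parallel := mul_sub_mul_eq_zero_of_common_root orth₁₂ orth₃₂ v_ne_zero
    have lagrange := Complex.lagrange_identity α₁₁ α₁₂ α₃₁ α₃₂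
    rw [parallel, show α₁₁ * conj α₃₁ + α₁₂ * conj α₃₂ = -(α₁₀ * conj α₃₀) by
      linear_combination orth₁₃] at lagrange
    simp only [norm_neg, norm_mul, Complex.norm_conj, norm_zero] at lagrange
    nlinarith
  · intro h
    refine ⟨0, conj α₃₀, 0, 1, 0, -conj α₁₀, 0, ?_, ?_, ?_, rfl, ?_, ?_, ?_⟩ <;>
      simp [h, mul_comm, add_comm]
end

section
/- There is no choice of complex scalars a_{jk} (j,k = 0,...,3) such that: (i) a_{00} = a_{01} = a_{02} = a_{03} = 1/2, (ii) a_{j0} + a_{j2} = a_{j1} + a_{j3} for all j, and (iii) the matrix with rows (a_{00}, a_{01}, a_{02}, a_{03}), (a_{10}, e^{4πi/3}a_{11}, a_{12}, e^{4πi/3}a_{13}), (a_{20}, e^{2πi/3}a_{21}, a_{22}, e^{2πi/3}a_{23}), (a_{30}, a_{31}, a_{32}, a_{33}) is unitary. -/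
open Complex
open scoped Real

/-!
Orthogonality of every other row to the constant first row says that each row of the matrix
sums to zero. For `j ≠ 0` the row sum is `(a_{j0} + a_{j2}) + ω (a_{j1} + a_{j3})` with `ω` a
cube root of unity, hence `ω ≠ -1`, and condition (ii) turns it into
`(1 + ω)(a_{j0} + a_{j2}) = 0`. So the unitary matrix sends `(1, 0, 1, 0)` to `(1, 0, 0, 0)`;
applying its adjoint, `(1, 0, 1, 0)` would be the conjugate of the first row `(1/2, …, 1/2)`.
-/

namespace Matrix

variable {n α : Type*} [Fintype n] [DecidableEq n]

theorem sum_row_eq_zero_of_row_eq_const [Field α] [StarRing α] {U : Matrix n n α}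
    (hU : U ∈ unitaryGroup n α) {i : n} {c : α} (hc : c ≠ 0) (hrow : ∀ k, U i k = c)
    {j : n} (hji : j ≠ i) : ∑ k, U j k = 0 := by
  have h := congrFun (congrFun (mem_unitaryGroup_iff.mp hU) j) i
  simp only [mul_apply, star_apply, hrow, one_apply_ne hji, ← Finset.sum_mul] at h
  exact (mul_eq_zero.mp h).resolve_right (star_ne_zero.mpr hc)

theorem eq_star_row_of_mulVec_eq_single [CommRing α] [StarRing α] {U : Matrix n n α}
    (hU : U ∈ unitaryGroup n α) {v : n → α} {i : n} (hv : U *ᵥ v = Pi.single i 1) :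
    v = star (U i) := by
  calc v = (star U * U) *ᵥ v := by rw [mem_unitaryGroup_iff'.mp hU, one_mulVec]
    _ = star U *ᵥ Pi.single i 1 := by rw [← mulVec_mulVec, hv]
    _ = star (U i) := by ext k; simp

end Matrix

theorem add_eq_zero_of_add_mul_add_mul_eq_zero {R : Type*} [CommRing R] [NoZeroDivisors R]
    {ω x₀ x₁ x₂ x₃ : R} (hω : ω ≠ -1) (hbal : x₀ + x₂ = x₁ + x₃)
    (hsum : x₀ + ω * x₁ + x₂ + ω * x₃ = 0) : x₀ + x₂ = 0 := by
  have h : (1 + ω) * (x₀ + x₂) = 0 := by linear_combination hsum + ω * hbal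
  exact (mul_eq_zero.mp h).resolve_left fun h' => hω (by linear_combination h')

theorem Complex.exp_nat_mul_two_pi_mul_I_div_three_ne_neg_one (m : ℕ) :
    exp (m * (2 * π * I) / 3) ≠ -1 := by
  intro h
  have hcube : exp (m * (2 * π * I) / 3) ^ 3 = 1 := by
    rw [← exp_nat_mul, Nat.cast_ofNat, mul_div_cancel₀ _ three_ne_zero,
      exp_nat_mul_two_pi_mul_I]
  rw [h] at hcube
  norm_num at hcube

/-- no-go result for μ₃: there are no complex scalars `a_{jk}` with
(i) `a_{0k} = 1/2` for all `k`, (ii) `a_{j0} + a_{j2} = a_{j1} + a_{j3}` for all `j`,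
such that the matrix with rows `(a_{00}, a_{01}, a_{02}, a_{03})`,
`(a_{10}, e^{4πi/3}a_{11}, a_{12}, e^{4πi/3}a_{13})`,
`(a_{20}, e^{2πi/3}a_{21}, a_{22}, e^{2πi/3}a_{23})`,
`(a_{30}, a_{31}, a_{32}, a_{33})` is unitary. -/
theorem no_go_cantor3 :
    ¬ ∃ a : Fin 4 → Fin 4 → ℂ,
      (∀ k : Fin 4, a 0 k = 1 / 2) ∧
      (∀ j : Fin 4, a j 0 + a j 2 = a j 1 + a j 3) ∧
      (Matrix.of fun j k : Fin 4 =>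
          (if k = 1 ∨ k = 3 then
            (if j = 1 then Complex.exp (4 * π * Complex.I / 3)
             else if j = 2 then Complex.exp (2 * π * Complex.I / 3)
             else 1)
           else 1) * a j k) ∈ Matrix.unitaryGroup (Fin 4) ℂ := by
  rintro ⟨a, hrow0, hbal, hU⟩
  have hsum := fun (j : Fin 4) (hj : j ≠ 0) =>
    Matrix.sum_row_eq_zero_of_row_eq_const hU (c := 1 / 2) (by norm_num)
      (fun k => by fin_cases k <;> simp [hrow0]) hj
  have hε₁ : exp (4 * π * I / 3) ≠ -1 := by
    convert exp_nat_mul_two_pi_mul_I_div_three_ne_neg_one 2 using 2; push_cast; ring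
  have hε₂ : exp (2 * π * I / 3) ≠ -1 := by
    simpa using exp_nat_mul_two_pi_mul_I_div_three_ne_neg_one 1
  have hcancel : ∀ j ≠ 0, a j 0 + a j 2 = 0 := by
    intro j hj
    fin_cases j
    · contradiction
    · refine add_eq_zero_of_add_mul_add_mul_eq_zero hε₁ (hbal 1) ?_
      simpa [Fin.sum_univ_four] using hsum 1 (by decide)
    · refine add_eq_zero_of_add_mul_add_mul_eq_zero hε₂ (hbal 2) ?_
      simpa [Fin.sum_univ_four] using hsum 2 (by decide)
    · refine add_eq_zero_of_add_mul_add_mul_eq_zero (by norm_num : (1 : ℂ) ≠ -1) (hbal 3) ?_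
      simpa [Fin.sum_univ_four] using hsum 3 (by decide)
  have hv := Matrix.eq_star_row_of_mulVec_eq_single hU (v := ![1, 0, 1, 0]) (i := 0) <| by
    ext j
    fin_cases j <;> simp [Matrix.mulVec, dotProduct, Fin.sum_univ_four, hrow0, hcancel]
    norm_num
  simpa [hrow0] using congrFun hv 1
end
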